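/- arXiv:2504.13780 — 4 statements merged into one kernel-verified Lean document; each statement's English description precedes it below -/
import Mathlib

section
/- At the Stackelberg equilibrium (p*, q*) with φ > α(C_s + C_m), the supplier's utility equals (φ - α(C_s + C_m))²/(8α) and the manufacturer's utility equals (φ - α(C_s + C_m))²/(16α); in particular U_S* = 2·U_M*. -/
/-! Facing the linear demand `φ - α p` with unit cost `c`, the monopoly price `(φ + α c) / (2α)`
earns the margin `(φ - α c) / (2α)` and sells `(φ - α c) / 2`. The manufacturer is such a monopolist
with cost `q + C_m`, so the supplier faces the halved demand `(φ - α C_m - α q) / 2` and is a monopolist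
with cost `C_s` for it; `q*` is its monopoly price. Writing `D = φ - α (C_s + C_m)`, the supplier's
margin is `D / (2α)`, the manufacturer's `D / (4α)` and the final demand `D / 4`. -/

section MonopolyPrice

variable {α : ℝ} (φ c : ℝ)

lemma monopolyPrice_sub_cost (hα : α ≠ 0) :
    (φ + α * c) / (2 * α) - c = (φ - α * c) / (2 * α) := by
  field_simp
  ring

lemma demand_at_monopolyPrice (hα : α ≠ 0) :
    φ - α * ((φ + α * c) / (2 * α)) = (φ - α * c) / 2 := by
  field_simp
  ring

end MonopolyPrice

theorem stackelberg_equilibrium_utilities_general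
    (α Cs Cm φ : ℝ) (hα : 0 < α)
    (hφ : α * (Cs + Cm) < φ)
    (qstar pstar : ℝ)
    (hq : qstar = (φ + α * (Cs - Cm)) / (2 * α))
    (hp : pstar = (φ + α * (qstar + Cm)) / (2 * α)) :
    max (φ - α * pstar) 0 * (qstar - Cs) = (φ - α * (Cs + Cm)) ^ 2 / (8 * α) ∧
    max (φ - α * pstar) 0 * (pstar - qstar - Cm) = (φ - α * (Cs + Cm)) ^ 2 / (16 * α) ∧
    max (φ - α * pstar) 0 * (qstar - Cs) =
      2 * (max (φ - α * pstar) 0 * (pstar - qstar - Cm)) := by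
  have hα₀ : α ≠ 0 := hα.ne'
  set D := φ - α * (Cs + Cm)
  have hq' : qstar = ((φ - α * Cm) + α * Cs) / (2 * α) := by rw [hq]; ring
  have supplier_margin : qstar - Cs = D / (2 * α) := by
    rw [hq', monopolyPrice_sub_cost _ _ hα₀]; ring
  have residual_demand : φ - α * (qstar + Cm) = D / 2 := by
    have := demand_at_monopolyPrice (φ - α * Cm) Cs hα₀
    rw [← hq'] at this; linear_combination this
  have manufacturer_margin : pstar - qstar - Cm = D / (4 * α) := by
    rw [sub_sub, hp, monopolyPrice_sub_cost _ _ hα₀, residual_demand]; field_simp; ring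
  have demand : max (φ - α * pstar) 0 = D / 4 := by
    rw [hp, demand_at_monopolyPrice _ _ hα₀, residual_demand, max_eq_left] <;> linarith
  rw [demand, supplier_margin, manufacturer_margin]
  refine ⟨?_, ?_, ?_⟩ <;> field_simp <;> ring

/-- At the Stackelberg equilibrium (p*, q*) with φ > α(C_s + C_m),
U_S* = (φ - α(C_s + C_m))²/(8α), U_M* = (φ - α(C_s + C_m))²/(16α), and U_S* = 2·U_M*. -/
theorem stackelberg_equilibrium_utilities
    (α Cs Cm φ : ℝ) (hα : 0 < α) (hα1 : α ≤ 1)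
    (hCs : 0 ≤ Cs) (hCm : 0 ≤ Cm) (hφ : α * (Cs + Cm) < φ)
    (qstar pstar : ℝ)
    (hq : qstar = (φ + α * (Cs - Cm)) / (2 * α))
    (hp : pstar = (φ + α * (qstar + Cm)) / (2 * α)) :
    max (φ - α * pstar) 0 * (qstar - Cs) = (φ - α * (Cs + Cm)) ^ 2 / (8 * α) ∧
    max (φ - α * pstar) 0 * (pstar - qstar - Cm) = (φ - α * (Cs + Cm)) ^ 2 / (16 * α) ∧
    max (φ - α * pstar) 0 * (qstar - Cs) =
      2 * (max (φ - α * pstar) 0 * (pstar - qstar - Cm)) :=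
  stackelberg_equilibrium_utilities_general α Cs Cm φ hα hφ qstar pstar hq hp
end

section
/- There exists π̄ > 0 such that for all π > π̄ and every greedy misreporting policy r ≠ r^id (i.e., r_{ij} = 0 for i < j, r not the identity), the manufacturer's limit utility Ũ_M(r, π) = Σ_{i≥j} σ_i r_{ij}(max(h_{ij} - πf(r),0))² is strictly less than Ũ_M(r^id, π) = Σ_i σ_i h_{ii}². -/
/-!
Let `ε i` be the mass row `i` of a greedy policy `r` puts strictly below the diagonal and
`s = ∑ σ i * ε i`; `s > 0` unless `r` is truthful. Strict monotonicity of `φ` gives a smallest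
gap `δ > 0`, so the penalty `y = π f(r)` is at least `π δ s`. If `|h| ≤ M`, then
`max (x - y) 0 ^ 2 ≤ x ^ 2 * max (1 - y / M) 0` for `x ≤ M`, and summing gives
`Ũ_M(r, π) ≤ max (1 - y / M) 0 * (T + s M²)` with `T = ∑ σ i * h i i ^ 2`. For `y ≥ M` this
vanishes; otherwise the loss `y T / M ≥ π δ s T / M` beats the gain `s M²` once `π > M³ / (δ T)`.
-/

open Finset

lemma max_sub_zero_sq_le {x y M : ℝ} (hxM : x ≤ M) (hy : 0 ≤ y) :
    max (x - y) 0 ^ 2 ≤ x ^ 2 * max (1 - y / M) 0 := by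
  rcases le_or_gt x y with hxy | hyx
  · rw [max_eq_right (by linarith), zero_pow two_ne_zero]
    positivity
  have hM : 0 < M := by linarith
  rw [max_eq_left (by linarith), max_eq_left (by linarith [(div_le_one hM).2 (hyx.le.trans hxM)])]
  have hxy : x ^ 2 * (y / M) ≤ x * y :=
    calc x ^ 2 * (y / M) = x * y * (x / M) := by ring
      _ ≤ x * y := mul_le_of_le_one_right (by nlinarith) ((div_le_one hM).2 hxM)
  nlinarith

lemma max_one_sub_div_mul_lt {M T s y c : ℝ} (hM : 0 < M) (hT : 0 < T) (hs : 0 < s)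
    (hc : M ^ 3 < c * T) (hy : c * s ≤ y) :
    max (1 - y / M) 0 * (T + s * M ^ 2) < T := by
  rcases le_total (1 - y / M) 0 with hle | hle
  · rw [max_eq_right hle, zero_mul]
    exact hT
  rw [max_eq_left hle]
  have hc0 : 0 < c := by nlinarith [pow_pos hM 3]
  have hy0 : 0 ≤ y := (mul_pos hc0 hs).le.trans hy
  have hloss : s * M ^ 3 < y * T := by
    nlinarith [mul_lt_mul_of_pos_left hc hs, mul_le_mul_of_nonneg_right hy hT.le]
  have hexpand : (1 - y / M) * (T + s * M ^ 2) * M =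
      T * M - (y * T - s * M ^ 3) - y * s * M ^ 2 := by
    field_simp
    ring
  have hys : 0 ≤ y * s * M ^ 2 := by positivity
  refine lt_of_mul_lt_mul_right ?_ hM.le
  rw [hexpand]
  linarith

section GreedyPolicy

variable {ι : Type*} [Fintype ι] [LinearOrder ι]

lemma sum_filter_le_eq_add_sum_filter_lt {β : Type*} [AddCommMonoid β] (i : ι) (g : ι → β) :
    ∑ j ∈ univ.filter (· ≤ i), g j = g i + ∑ j ∈ univ.filter (· < i), g j := by
  rw [← sum_insert (s := univ.filter (· < i)) (by simp)]
  congr 1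
  ext j
  simp [le_iff_lt_or_eq, or_comm]

lemma StrictMono.exists_pos_le_sub {φ : ι → ℝ} (hφ : StrictMono φ) :
    ∃ δ > 0, ∀ i j, j < i → δ ≤ φ i - φ j := by
  set S := (univ : Finset (ι × ι)).filter fun p => p.2 < p.1
  rcases S.eq_empty_or_nonempty with hS | hS
  · refine ⟨1, one_pos, fun i j hji => ?_⟩
    have hij : (i, j) ∈ S := mem_filter.2 ⟨mem_univ (i, j), hji⟩
    exact (notMem_empty _ (hS ▸ hij)).elim
  refine ⟨S.inf' hS fun p => φ p.1 - φ p.2, ?_, fun i j hji => ?_⟩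
  · exact (lt_inf'_iff hS).2 fun p hp => sub_pos.2 (hφ (mem_filter.1 hp).2)
  · have hij : (i, j) ∈ S := mem_filter.2 ⟨mem_univ (i, j), hji⟩
    exact inf'_le (fun p : ι × ι => φ p.1 - φ p.2) hij

structure IsGreedyPolicy (r : ι → ι → ℝ) : Prop where
  nonneg : ∀ i j, 0 ≤ r i j
  eq_zero_of_lt : ∀ i j, i < j → r i j = 0
  sum_eq_one : ∀ i, ∑ j, r i j = 1

def misreportMass (r : ι → ι → ℝ) (i : ι) : ℝ :=
  ∑ j ∈ univ.filter (· < i), r i j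

/-- The paper's `f(r)`. -/
def misreportCost (φ σ : ι → ℝ) (r : ι → ι → ℝ) : ℝ :=
  ∑ i, ∑ j ∈ univ.filter (· < i), σ i * (φ i - φ j) * r i j

/-- The paper's limit utility `Ũ_M(r, π)` is `limitUtility σ h r (π * misreportCost φ σ r)`. -/
def limitUtility (σ : ι → ℝ) (h r : ι → ι → ℝ) (y : ℝ) : ℝ :=
  ∑ i, ∑ j ∈ univ.filter (· ≤ i), σ i * r i j * max (h i j - y) 0 ^ 2

namespace IsGreedyPolicy

variable {r : ι → ι → ℝ} {σ : ι → ℝ}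

lemma le_one (hr : IsGreedyPolicy r) (i j : ι) : r i j ≤ 1 :=
  hr.sum_eq_one i ▸ single_le_sum (fun j _ => hr.nonneg i j) (mem_univ j)

lemma misreportMass_nonneg (hr : IsGreedyPolicy r) (i : ι) : 0 ≤ misreportMass r i :=
  sum_nonneg fun j _ => hr.nonneg i j

lemma diag_eq (hr : IsGreedyPolicy r) (i : ι) : r i i = 1 - misreportMass r i := by
  have hrow : ∑ j ∈ univ.filter (· ≤ i), r i j = 1 := by
    rw [← hr.sum_eq_one i]
    exact sum_subset (filter_subset _ _) fun j _ hj => hr.eq_zero_of_lt i j (by simpa using hj)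
  rw [sum_filter_le_eq_add_sum_filter_lt] at hrow
  rw [misreportMass]
  linarith

lemma eq_id_of_misreportMass_eq_zero (hr : IsGreedyPolicy r) (h0 : ∀ i, misreportMass r i = 0) :
    r = fun i j => if i = j then 1 else 0 := by
  funext i j
  rcases lt_trichotomy i j with hij | rfl | hij
  · rw [if_neg hij.ne, hr.eq_zero_of_lt i j hij]
  · rw [if_pos rfl, hr.diag_eq, h0, sub_zero]
  · rw [if_neg hij.ne']
    exact (sum_eq_zero_iff_of_nonneg fun j _ => hr.nonneg i j).1 (h0 i) j (by simpa using hij)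

lemma sum_mul_misreportMass_pos (hr : IsGreedyPolicy r) (hσ : ∀ i, 0 < σ i)
    (hne : r ≠ fun i j => if i = j then 1 else 0) :
    0 < ∑ i, σ i * misreportMass r i := by
  have hterm : ∀ i ∈ univ, 0 ≤ σ i * misreportMass r i :=
    fun i _ => mul_nonneg (hσ i).le (hr.misreportMass_nonneg i)
  refine (sum_nonneg hterm).lt_of_ne fun hzero =>
    hne (hr.eq_id_of_misreportMass_eq_zero fun i => ?_)
  have hi := (sum_eq_zero_iff_of_nonneg hterm).1 hzero.symm i (mem_univ i)
  exact (mul_eq_zero.1 hi).resolve_left (hσ i).ne'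

lemma mul_sum_mul_misreportMass_le_misreportCost (hr : IsGreedyPolicy r) {φ : ι → ℝ} {δ : ℝ}
    (hσ : ∀ i, 0 ≤ σ i) (hgap : ∀ i j, j < i → δ ≤ φ i - φ j) :
    δ * ∑ i, σ i * misreportMass r i ≤ misreportCost φ σ r := by
  rw [mul_sum]
  refine sum_le_sum fun i _ => ?_
  rw [misreportMass, mul_sum, mul_sum]
  refine sum_le_sum fun j hj => ?_
  have hδ := hgap i j (mem_filter.1 hj).2
  calc δ * (σ i * r i j) = σ i * δ * r i j := by ring
    _ ≤ σ i * (φ i - φ j) * r i j := by gcongr <;> [exact hr.nonneg i j; exact hσ i]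

lemma sum_mul_sq_le (hr : IsGreedyPolicy r) (hσ : ∀ i, 0 ≤ σ i) {h : ι → ι → ℝ} {M : ℝ}
    (hM : ∀ i j, |h i j| ≤ M) :
    ∑ i, ∑ j ∈ univ.filter (· ≤ i), σ i * r i j * h i j ^ 2 ≤
      ∑ i, σ i * h i i ^ 2 + (∑ i, σ i * misreportMass r i) * M ^ 2 := by
  rw [sum_mul, ← sum_add_distrib]
  refine sum_le_sum fun i _ => ?_
  rw [sum_filter_le_eq_add_sum_filter_lt]
  have hdiag : σ i * r i i * h i i ^ 2 ≤ σ i * h i i ^ 2 := by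
    nlinarith [mul_nonneg (mul_nonneg (hσ i) (sq_nonneg (h i i))) (sub_nonneg.2 (hr.le_one i i))]
  have hbelow : ∑ j ∈ univ.filter (· < i), σ i * r i j * h i j ^ 2 ≤
      σ i * misreportMass r i * M ^ 2 := by
    rw [misreportMass, mul_sum, sum_mul]
    refine sum_le_sum fun j _ => ?_
    have hsq : h i j ^ 2 ≤ M ^ 2 := sq_abs (h i j) ▸ pow_le_pow_left₀ (abs_nonneg _) (hM i j) 2
    have hw := mul_nonneg (hσ i) (hr.nonneg i j)
    gcongr
  linarith

lemma limitUtility_le {h : ι → ι → ℝ} {M y : ℝ} (hr : IsGreedyPolicy r) (hσ : ∀ i, 0 ≤ σ i)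
    (hM : ∀ i j, |h i j| ≤ M) (hy : 0 ≤ y) :
    limitUtility σ h r y ≤
      max (1 - y / M) 0 * (∑ i, σ i * h i i ^ 2 + (∑ i, σ i * misreportMass r i) * M ^ 2) := by
  refine le_trans ?_ (mul_le_mul_of_nonneg_left (hr.sum_mul_sq_le hσ hM) (le_max_right _ _))
  rw [limitUtility, mul_sum]
  refine sum_le_sum fun i _ => ?_
  rw [mul_sum]
  refine sum_le_sum fun j _ => ?_
  have hw := mul_nonneg (hσ i) (hr.nonneg i j)
  calc σ i * r i j * max (h i j - y) 0 ^ 2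
      ≤ σ i * r i j * (h i j ^ 2 * max (1 - y / M) 0) := by
        gcongr
        exact max_sub_zero_sq_le ((le_abs_self _).trans (hM i j)) hy
    _ = max (1 - y / M) 0 * (σ i * r i j * h i j ^ 2) := by ring

end IsGreedyPolicy

theorem exists_penalty_limitUtility_lt {φ σ : ι → ℝ} {h : ι → ι → ℝ} (hφ : StrictMono φ)
    (hσ : ∀ i, 0 < σ i) (hT : 0 < ∑ i, σ i * h i i ^ 2) :
    ∃ πbar > (0 : ℝ), ∀ π > πbar, ∀ r : ι → ι → ℝ, IsGreedyPolicy r →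
      (r ≠ fun i j => if i = j then 1 else 0) →
      limitUtility σ h r (π * misreportCost φ σ r) < ∑ i, σ i * h i i ^ 2 := by
  obtain ⟨δ, hδ, hgap⟩ := hφ.exists_pos_le_sub
  obtain ⟨M, hM, hhM⟩ : ∃ M > 0, ∀ i j, |h i j| ≤ M := by
    obtain ⟨M, hM⟩ := Finite.exists_le fun p : ι × ι => |h p.1 p.2|
    exact ⟨max M 1, by positivity, fun i j => (hM (i, j)).trans (le_max_left _ _)⟩
  refine ⟨M ^ 3 / (δ * ∑ i, σ i * h i i ^ 2), by positivity, fun π hπ r hr hne => ?_⟩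
  have hσ' i : 0 ≤ σ i := (hσ i).le
  have hs := hr.sum_mul_misreportMass_pos hσ hne
  have hcost := hr.mul_sum_mul_misreportMass_le_misreportCost hσ' hgap
  have hπ0 : 0 < π := lt_trans (by positivity) hπ
  have hπ' : M ^ 3 < π * δ * ∑ i, σ i * h i i ^ 2 := by
    rwa [gt_iff_lt, div_lt_iff₀ (by positivity), ← mul_assoc] at hπ
  have hy : π * δ * ∑ i, σ i * misreportMass r i ≤ π * misreportCost φ σ r := by
    rw [mul_assoc]
    exact mul_le_mul_of_nonneg_left hcost hπ0.le
  exact (hr.limitUtility_le hσ' hhM (mul_nonneg hπ0.le ((mul_pos hδ hs).le.trans hcost))).trans_lt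
    (max_one_sub_div_mul_lt hM hT hs hπ' hy)

end GreedyPolicy

theorem exists_truth_revealing_penalty_general
    (L : ℕ) (φ σ : Fin (L + 1) → ℝ) (α Cm Cs : ℝ)
    (hα : 0 < α) (hmono : StrictMono φ)
    (hσ : ∀ i, 0 < σ i)
    (hφ1 : α * (Cs + Cm) < φ 0)
    (h : Fin (L + 1) → Fin (L + 1) → ℝ)
    (hh : ∀ i j, h i j = (2 * φ i - φ j - α * (Cm + Cs)) / (4 * Real.sqrt α)) :
    ∃ πbar > (0 : ℝ), ∀ π > πbar, ∀ r : Fin (L + 1) → Fin (L + 1) → ℝ,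
      (∀ i j, 0 ≤ r i j) → (∀ i j, i < j → r i j = 0) →
      (∀ i, ∑ j, r i j = 1) →
      (r ≠ fun i j => if i = j then 1 else 0) →
      ∑ i, ∑ j ∈ Finset.univ.filter (· ≤ i), σ i * r i j *
          (max (h i j - π * (∑ i', ∑ j' ∈ Finset.univ.filter (· < i'),
            σ i' * (φ i' - φ j') * r i' j')) 0) ^ 2
        < ∑ i, σ i * (h i i) ^ 2 := by
  have h00 : 0 < h 0 0 := by
    rw [hh]
    have hsqrt : 0 < Real.sqrt α := Real.sqrt_pos.2 hα
    exact div_pos (by linarith) (by positivity)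
  have hT : 0 < ∑ i, σ i * h i i ^ 2 :=
    (mul_pos (hσ 0) (pow_pos h00 2)).trans_le
      (single_le_sum (fun i _ => mul_nonneg (hσ i).le (sq_nonneg (h i i))) (mem_univ 0))
  obtain ⟨πbar, hπbar, hlt⟩ := exists_penalty_limitUtility_lt hmono hσ hT
  exact ⟨πbar, hπbar, fun π hπ r hr0 hrup hrsum hne => hlt π hπ r ⟨hr0, hrup, hrsum⟩ hne⟩

/-- Theorem 1: There exists π̄ > 0 such that for all π > π̄ and every
greedy misreporting policy r ≠ r^id, the manufacturer's limit utility is strictly less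
than the truthful utility Σ_i σ_i h_{ii}². -/
theorem exists_truth_revealing_penalty
    (L : ℕ) (φ σ : Fin (L + 1) → ℝ) (α Cm Cs : ℝ)
    (hα : 0 < α) (hα1 : α ≤ 1) (hmono : StrictMono φ)
    (hσ : ∀ i, 0 < σ i) (hσ1 : ∑ i, σ i = 1)
    (hφ1 : α * (Cs + Cm) < φ 0)
    (h : Fin (L + 1) → Fin (L + 1) → ℝ)
    (hh : ∀ i j, h i j = (2 * φ i - φ j - α * (Cm + Cs)) / (4 * Real.sqrt α)) :
    ∃ πbar > (0 : ℝ), ∀ π > πbar, ∀ r : Fin (L + 1) → Fin (L + 1) → ℝ,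
      (∀ i j, 0 ≤ r i j) → (∀ i j, i < j → r i j = 0) →
      (∀ i, ∑ j, r i j = 1) →
      (r ≠ fun i j => if i = j then 1 else 0) →
      ∑ i, ∑ j ∈ Finset.univ.filter (· ≤ i), σ i * r i j *
          (max (h i j - π * (∑ i', ∑ j' ∈ Finset.univ.filter (· < i'),
            σ i' * (φ i' - φ j') * r i' j')) 0) ^ 2
        < ∑ i, σ i * (h i i) ^ 2 :=
  exists_truth_revealing_penalty_general L φ σ α Cm Cs hα hmono hσ hφ1 h hh
end

section
/- The function ḡ(d̄) = [Σ_{i=N_j(d̄)}^L σ_i r_{ij} (√α h_{ij} - πα(d̄ - √α h_{jj}))] / (Σ_{i=1}^L σ_i r_{ij}) - d̄, where N_j(d̄) = min{i : h_{ij} > √α π (d̄ - √α h_{jj})}, is strictly decreasing in d̄ on [0, φ_L]. -/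
/-!
Since `√α > 0`, the filter condition says exactly that the summand `√α h_{ij} - πα(d̄ - √α h_{jj})`
is positive, so the numerator is `∑ σ_i r_{ij} (√α h_{ij} - πα(d̄ - √α h_{jj}))⁺`. Each positive part
is nonincreasing in `d̄` because `πα ≥ 0` and the weights are nonnegative, so `ḡ` is a nonincreasing
function minus `d̄`.
-/

theorem Finset.sum_filter_pos_mul_eq_sum_mul_max {ι : Type*} (s : Finset ι) (w t : ι → ℝ) :
    ∑ i ∈ s.filter (fun i => 0 < t i), w i * t i = ∑ i ∈ s, w i * max (t i) 0 := by
  rw [Finset.sum_filter]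
  refine Finset.sum_congr rfl fun i _ => ?_
  split_ifs with ht
  · rw [max_eq_left ht.le]
  · rw [max_eq_right (not_lt.1 ht), mul_zero]

theorem Finset.antitone_sum_mul_max_zero {ι : Type*} (s : Finset ι) {w : ι → ℝ}
    (hw : ∀ i ∈ s, 0 ≤ w i) {f : ι → ℝ → ℝ} (hf : ∀ i ∈ s, Antitone (f i)) :
    Antitone fun x => ∑ i ∈ s, w i * max (f i x) 0 :=
  fun _ _ hxy => Finset.sum_le_sum fun i hi =>
    mul_le_mul_of_nonneg_left (max_le_max_right 0 (hf i hi hxy)) (hw i hi)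

theorem Real.sqrt_mul_mul_lt_iff {α π y b : ℝ} (hα : 0 < α) :
    √α * π * y < b ↔ 0 < √α * b - π * α * y := by
  have hsq : √α * (√α * π * y) = π * α * y := by
    rw [← mul_assoc, ← mul_assoc, Real.mul_self_sqrt hα.le]; ring
  rw [← hsq, ← mul_sub, mul_pos_iff_of_pos_left (Real.sqrt_pos.2 hα), sub_pos]

theorem Antitone.strictAnti_div_const_sub_id {F : ℝ → ℝ} (hF : Antitone F) {D : ℝ} (hD : 0 ≤ D) :
    StrictAnti fun x => F x / D - x := by
  have hFD : Antitone fun x => F x / D := fun _ _ hxy => div_le_div_of_nonneg_right (hF hxy) hD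
  simpa only [sub_eq_add_neg, id] using hFD.add_strictAnti strictMono_id.neg

theorem gbar_strictAnti_general
    (L : ℕ) (φ σ : Fin (L + 1) → ℝ) (α π : ℝ)
    (hα : 0 < α) (hπ : 0 ≤ π)
    (hσ : ∀ i, 0 < σ i)
    (j : Fin (L + 1))
    (r : Fin (L + 1) → Fin (L + 1) → ℝ) (hr0 : ∀ i, 0 ≤ r i j)
    (h : Fin (L + 1) → Fin (L + 1) → ℝ)
    (g : ℝ → ℝ)
    (hg : ∀ d, g d =
      (∑ i ∈ Finset.univ.filter
          (fun i => Real.sqrt α * π * (d - Real.sqrt α * h j j) < h i j),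
        σ i * r i j * (Real.sqrt α * h i j - π * α * (d - Real.sqrt α * h j j)))
        / (∑ i, σ i * r i j) - d) :
    StrictAntiOn g (Set.Icc 0 (φ (Fin.last L))) := by
  set c := √α * h j j
  have hw : ∀ i ∈ Finset.univ, 0 ≤ σ i * r i j := fun i _ => mul_nonneg (hσ i).le (hr0 i)
  have hg_max : g = fun d =>
      (∑ i, σ i * r i j * max (√α * h i j - π * α * (d - c)) 0) / (∑ i, σ i * r i j) - d := by
    funext d
    rw [hg, ← Finset.sum_filter_pos_mul_eq_sum_mul_max,
      Finset.filter_congr fun i _ => Real.sqrt_mul_mul_lt_iff hα]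
  have hF : Antitone fun d => ∑ i, σ i * r i j * max (√α * h i j - π * α * (d - c)) 0 :=
    Finset.antitone_sum_mul_max_zero _ hw fun i _ _ _ hxy =>
      sub_le_sub_left (mul_le_mul_of_nonneg_left (sub_le_sub_right hxy c) (by positivity)) _
  rw [hg_max]
  exact (hF.strictAnti_div_const_sub_id (Finset.sum_nonneg hw)).strictAntiOn _

/-- The ODE right-hand side ḡ is strictly decreasing on [0, φ_L]. -/
theorem gbar_strictAnti
    (L : ℕ) (φ σ : Fin (L + 1) → ℝ) (α Cm Cs π : ℝ)
    (hα : 0 < α) (hα1 : α ≤ 1) (hπ : 0 ≤ π) (hmono : StrictMono φ)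
    (hσ : ∀ i, 0 < σ i)
    (j : Fin (L + 1))
    (r : Fin (L + 1) → Fin (L + 1) → ℝ) (hr0 : ∀ i, 0 ≤ r i j)
    (hrpos : 0 < ∑ i, σ i * r i j)
    (h : Fin (L + 1) → Fin (L + 1) → ℝ)
    (hh : ∀ i i', h i i' = (2 * φ i - φ i' - α * (Cm + Cs)) / (4 * Real.sqrt α))
    (g : ℝ → ℝ)
    (hg : ∀ d, g d =
      (∑ i ∈ Finset.univ.filter
          (fun i => Real.sqrt α * π * (d - Real.sqrt α * h j j) < h i j),
        σ i * r i j * (Real.sqrt α * h i j - π * α * (d - Real.sqrt α * h j j)))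
        / (∑ i, σ i * r i j) - d) :
    StrictAntiOn g (Set.Icc 0 (φ (Fin.last L))) :=
  gbar_strictAnti_general L φ σ α π hα hπ hσ j r hr0 h g hg
end

section
/- For any misreporting policy r with Σ_j r_{ij} = 1, the difference α Σ_{i,j} σ_i r_{ij} h_{jj} h_{ij} - α Σ_i σ_i h_{ii}² equals -(1/16) Σ_i σ_i Σ_j r_{ij} (φ_j - φ_i)², which is strictly negative whenever r_{ij} > 0 for some i ≠ j. -/
/-!
Since every row of `r` sums to one, `Σ_i σ_i h_ii²` equals `Σ_i σ_i Σ_j r_ij h_ii²`, so the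
difference is the `σ_i r_ij`-weighted sum of `α (h_jj h_ij - h_ii²) = -(φ_j - φ_i)² / 16`.
A positive off-diagonal weight meets a positive square because `φ` is injective.
-/

open Finset

theorem mul_diag_mul_sub_sq_eq {ι : Type*} (φ : ι → ℝ) {α : ℝ} (hα : 0 < α) (c : ℝ)
    (h : ι → ι → ℝ) (hh : ∀ i j, h i j = (2 * φ i - φ j - α * c) / (4 * Real.sqrt α))
    (i j : ι) :
    α * (h j j * h i j - h i i ^ 2) = -(1 / 16) * (φ j - φ i) ^ 2 := by
  have hs : Real.sqrt α ≠ 0 := (Real.sqrt_pos.mpr hα).ne'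
  have hsq : Real.sqrt α ^ 2 = α := Real.sq_sqrt hα.le
  rw [hh, hh, hh]
  -- abstract `√α` so that only the free occurrences of `α` become `√α ^ 2`
  set s := Real.sqrt α
  rw [← hsq]
  field_simp
  ring

theorem sum_sum_mul_sub_sum_eq_of_sum_eq_one {ι R : Type*} [Fintype ι] [CommRing R]
    (σ : ι → R) (r : ι → ι → R) (hsum : ∀ i, ∑ j, r i j = 1) (g : ι → ι → R) (d : ι → R) :
    ∑ i, ∑ j, σ i * r i j * g i j - ∑ i, σ i * d i
      = ∑ i, σ i * ∑ j, r i j * (g i j - d i) := by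
  rw [← sum_sub_distrib]
  refine sum_congr rfl fun i _ => ?_
  simp only [mul_sub, sum_sub_distrib, ← sum_mul, hsum, mul_sum, mul_assoc, one_mul]

theorem sum_mul_sum_mul_sq_sub_pos {ι : Type*} [Fintype ι] {φ σ : ι → ℝ}
    (hinj : Function.Injective φ) (hσ : ∀ i, 0 < σ i) {r : ι → ι → ℝ} (hr0 : ∀ i j, 0 ≤ r i j)
    {i j : ι} (hij : i ≠ j) (hrij : 0 < r i j) :
    0 < ∑ i, σ i * ∑ j, r i j * (φ j - φ i) ^ 2 := by
  have hterm_nonneg : ∀ k l, 0 ≤ r k l * (φ l - φ k) ^ 2 := fun k l =>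
    mul_nonneg (hr0 k l) (sq_nonneg _)
  have hterm_pos : 0 < r i j * (φ j - φ i) ^ 2 :=
    mul_pos hrij (sq_pos_of_ne_zero (sub_ne_zero.mpr (hinj.ne hij.symm)))
  have hrow_pos : 0 < ∑ l, r i l * (φ l - φ i) ^ 2 :=
    sum_pos' (fun l _ => hterm_nonneg i l) ⟨j, mem_univ j, hterm_pos⟩
  exact sum_pos' (fun k _ => mul_nonneg (hσ k).le (sum_nonneg fun l _ => hterm_nonneg k l))
    ⟨i, mem_univ i, mul_pos (hσ i) hrow_pos⟩

theorem weighted_h_difference_general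
    (L : ℕ) (φ σ : Fin L → ℝ) (α Cm Cs : ℝ)
    (hα : 0 < α) (hinj : Function.Injective φ) (hσ : ∀ i, 0 < σ i)
    (h : Fin L → Fin L → ℝ)
    (hh : ∀ i j, h i j = (2 * φ i - φ j - α * (Cm + Cs)) / (4 * Real.sqrt α))
    (r : Fin L → Fin L → ℝ) (hr0 : ∀ i j, 0 ≤ r i j)
    (hsum : ∀ i, ∑ j, r i j = 1) :
    (α * ∑ i, ∑ j, σ i * r i j * h j j * h i j) - α * ∑ i, σ i * (h i i) ^ 2
      = -(1 / 16) * ∑ i, σ i * ∑ j, r i j * (φ j - φ i) ^ 2 ∧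
    ((∃ i j, i ≠ j ∧ 0 < r i j) →
      (α * ∑ i, ∑ j, σ i * r i j * h j j * h i j) - α * ∑ i, σ i * (h i i) ^ 2 < 0) := by
  have hdiff : (α * ∑ i, ∑ j, σ i * r i j * h j j * h i j) - α * ∑ i, σ i * (h i i) ^ 2
      = -(1 / 16) * ∑ i, σ i * ∑ j, r i j * (φ j - φ i) ^ 2 :=
    calc (α * ∑ i, ∑ j, σ i * r i j * h j j * h i j) - α * ∑ i, σ i * (h i i) ^ 2
        = ∑ i, ∑ j, σ i * r i j * (α * (h j j * h i j)) - ∑ i, σ i * (α * h i i ^ 2) := by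
          simp only [mul_sum]
          ring_nf
      _ = ∑ i, σ i * ∑ j, r i j * (α * (h j j * h i j - h i i ^ 2)) := by
          rw [sum_sum_mul_sub_sum_eq_of_sum_eq_one σ r hsum]
          simp only [mul_sub]
      _ = -(1 / 16) * ∑ i, σ i * ∑ j, r i j * (φ j - φ i) ^ 2 := by
          simp only [mul_diag_mul_sub_sq_eq φ hα (Cm + Cs) h hh, mul_sum]
          ring_nf
  refine ⟨hdiff, fun ⟨i, j, hij, hrij⟩ => ?_⟩
  have hpos := sum_mul_sum_mul_sq_sub_pos hinj hσ hr0 hij hrij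
  linarith

/-- For any misreporting policy r with row sums 1,
α Σ_{i,j} σ_i r_{ij} h_{jj} h_{ij} - α Σ_i σ_i h_{ii}²
 = -(1/16) Σ_i σ_i Σ_j r_{ij}(φ_j - φ_i)², strictly negative if r_{ij} > 0 for some i ≠ j. -/
theorem weighted_h_difference
    (L : ℕ) (φ σ : Fin L → ℝ) (α Cm Cs : ℝ)
    (hα : 0 < α) (hα1 : α ≤ 1) (hinj : Function.Injective φ) (hσ : ∀ i, 0 < σ i)
    (h : Fin L → Fin L → ℝ)
    (hh : ∀ i j, h i j = (2 * φ i - φ j - α * (Cm + Cs)) / (4 * Real.sqrt α))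
    (r : Fin L → Fin L → ℝ) (hr0 : ∀ i j, 0 ≤ r i j)
    (hsum : ∀ i, ∑ j, r i j = 1) :
    (α * ∑ i, ∑ j, σ i * r i j * h j j * h i j) - α * ∑ i, σ i * (h i i) ^ 2
      = -(1 / 16) * ∑ i, σ i * ∑ j, r i j * (φ j - φ i) ^ 2 ∧
    ((∃ i j, i ≠ j ∧ 0 < r i j) →
      (α * ∑ i, ∑ j, σ i * r i j * h j j * h i j) - α * ∑ i, σ i * (h i i) ^ 2 < 0) :=
  weighted_h_difference_general L φ σ α Cm Cs hα hinj hσ h hh r hr0 hsum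
end
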